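/- arXiv:2210.01981 — 2 statements merged into one kernel-verified Lean document; each statement's English description precedes it below -/
import Mathlib

section
/- Let τ > 0 and let A ∈ ℝ^{d×n} have SVD A = UΣVᵀ with singular values σ₁ ≥ ... ≥ σ_n ≥ 0. Then the singular value thresholding operator S_τ(A) = U·diag(max(σᵢ − τ, 0))·Vᵀ is the unique minimizer of X ↦ τ‖X‖_* + (1/2)‖X − A‖_F², where ‖X‖_* denotes the nuclear norm (sum of singular values). -/
/-!
Let `S = S_τ(A)` and `W = A - S = U diag(min(σᵢ, τ)) Vᵀ`. Since `|min(σᵢ, τ)| ≤ τ`, `W` has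
operator norm at most `τ`, so Cauchy–Schwarz in an orthonormal eigenbasis of `XᵀX` gives
`⟨W, X⟩ ≤ τ ‖X‖_*` for every `X`; as `W` and `S` share singular vectors, equality holds at
`X = S`. Hence `W` is a subgradient of `τ ‖·‖_*` at `S`, and expanding the square shows that the
objective at `X` exceeds the one at `S` by at least `½ ‖X - S‖_F² > 0`.
-/

open Matrix

noncomputable def frob {d n : ℕ} (M : Matrix (Fin d) (Fin n) ℝ) : ℝ :=
  Real.sqrt (∑ i, ∑ j, (M i j) ^ 2)

/-- The nuclear norm of a matrix: the sum of its singular values, i.e. the sum of the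
square roots of the eigenvalues of XᴴX. -/
noncomputable def nuclearNorm {d n : ℕ} (X : Matrix (Fin d) (Fin n) ℝ) : ℝ :=
  ∑ i, Real.sqrt ((show (Xᵀ * X).IsHermitian by
    simpa [Matrix.conjTranspose_eq_transpose_of_trivial] using
      Matrix.isHermitian_conjTranspose_mul_self X).eigenvalues i)

namespace Matrix

variable {R m n k : Type*} [CommRing R]

theorem dotProduct_mulVec_self [Fintype m] [Fintype n] (X : Matrix m n R) (v : n → R) :
    (X *ᵥ v) ⬝ᵥ (X *ᵥ v) = v ⬝ᵥ ((Xᵀ * X) *ᵥ v) := by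
  rw [← mulVec_mulVec, dotProduct_mulVec v, vecMul_transpose]

theorem dotProduct_le_sqrt_mul_sqrt [Fintype n] (u v : n → ℝ) :
    u ⬝ᵥ v ≤ √(u ⬝ᵥ u) * √(v ⬝ᵥ v) := by
  simpa only [dotProduct, sq] using Real.sum_mul_le_sqrt_mul_sqrt Finset.univ u v

theorem trace_transpose_mul_eq_sum_dotProduct [Fintype m] [Fintype n] [DecidableEq n]
    {Q : Matrix n n R} (hQ : Q * Qᵀ = 1) (W X : Matrix m n R) :
    (Wᵀ * X).trace = ∑ i, (W *ᵥ Qᵀ i) ⬝ᵥ (X *ᵥ Qᵀ i) := by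
  calc (Wᵀ * X).trace = (Wᵀ * X * (Q * Qᵀ)).trace := by rw [hQ, Matrix.mul_one]
    _ = ((W * Q)ᵀ * (X * Q)).trace := by
      rw [← Matrix.mul_assoc, trace_mul_comm, transpose_mul]
      simp only [Matrix.mul_assoc]
    _ = ∑ i, (W *ᵥ Qᵀ i) ⬝ᵥ (X *ᵥ Qᵀ i) := by
      simp only [trace, diag_apply, mul_apply, transpose_apply]
      rfl

theorem transpose_mul_diagonal_mul_transpose [Fintype m] [Fintype k] [DecidableEq k]
    {U : Matrix m k R} (hU : Uᵀ * U = 1) (V : Matrix n k R) (a b : k → R) :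
    (U * diagonal a * Vᵀ)ᵀ * (U * diagonal b * Vᵀ) = V * diagonal (a * b) * Vᵀ := by
  calc (U * diagonal a * Vᵀ)ᵀ * (U * diagonal b * Vᵀ)
      = V * diagonal a * (Uᵀ * U) * diagonal b * Vᵀ := by
        simp only [transpose_mul, transpose_transpose, diagonal_transpose, Matrix.mul_assoc]
    _ = V * diagonal (a * b) * Vᵀ := by
        rw [hU, Matrix.mul_one, Matrix.mul_assoc V, diagonal_mul_diagonal]
        rfl

theorem trace_transpose_mul_diagonal_mul_transpose [Fintype m] [Fintype k] [DecidableEq k]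
    {U : Matrix m k R} {V : Matrix k k R} (hU : Uᵀ * U = 1) (hV : Vᵀ * V = 1) (a b : k → R) :
    ((U * diagonal a * Vᵀ)ᵀ * (U * diagonal b * Vᵀ)).trace = ∑ i, a i * b i := by
  rw [transpose_mul_diagonal_mul_transpose hU, trace_mul_cycle, hV, Matrix.one_mul,
    trace_diagonal]
  rfl

theorem dotProduct_mulVec_self_le_of_abs_le [Fintype m] [Fintype k] [DecidableEq k]
    {U : Matrix m k ℝ} {V : Matrix k k ℝ} (hU : Uᵀ * U = 1) (hV : Vᵀ * V = 1)
    {s : k → ℝ} {τ : ℝ} (hs : ∀ i, |s i| ≤ τ) (v : k → ℝ) :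
    ((U * diagonal s * Vᵀ) *ᵥ v) ⬝ᵥ ((U * diagonal s * Vᵀ) *ᵥ v) ≤ τ ^ 2 * (v ⬝ᵥ v) := by
  set w := Vᵀ *ᵥ v
  have hw : w ⬝ᵥ w = v ⬝ᵥ v := by
    rw [dotProduct_mulVec_self, transpose_transpose, mul_eq_one_comm.mp hV, one_mulVec]
  calc ((U * diagonal s * Vᵀ) *ᵥ v) ⬝ᵥ ((U * diagonal s * Vᵀ) *ᵥ v)
      = ∑ i, s i ^ 2 * (w i * w i) := by
        rw [dotProduct_mulVec_self, transpose_mul_diagonal_mul_transpose hU, ← mulVec_mulVec,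
          ← mulVec_mulVec, dotProduct_mulVec, ← mulVec_transpose, dotProduct]
        simp only [mulVec_diagonal, Pi.mul_apply]
        exact Finset.sum_congr rfl fun i _ => by ring
    _ ≤ ∑ i, τ ^ 2 * (w i * w i) := by
        refine Finset.sum_le_sum fun i _ => mul_le_mul_of_nonneg_right ?_ (mul_self_nonneg _)
        exact sq_le_sq' (neg_le_of_abs_le (hs i)) (le_of_abs_le (hs i))
    _ = τ ^ 2 * (v ⬝ᵥ v) := by rw [← Finset.mul_sum, ← hw]; rfl

theorem isHermitian_transpose_mul_self [Fintype m] (X : Matrix m n ℝ) :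
    (Xᵀ * X).IsHermitian := by
  simpa only [conjTranspose_eq_transpose_of_trivial] using isHermitian_conjTranspose_mul_self X

theorem IsHermitian.sum_comp_eigenvalues_of_charpoly_eq [Fintype n] [DecidableEq n]
    {M : Matrix n n ℝ} (hM : M.IsHermitian) {f : n → ℝ}
    (hf : M.charpoly = ∏ i, (Polynomial.X - Polynomial.C (f i))) (g : ℝ → ℝ) :
    ∑ i, g (hM.eigenvalues i) = ∑ i, g (f i) := by
  have hroots : Finset.univ.val.map hM.eigenvalues = Finset.univ.val.map f := by
    have h := hM.roots_charpoly_eq_eigenvalues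
    rw [hf, Polynomial.roots_prod _ _
      (by simp [Finset.prod_ne_zero_iff, Polynomial.X_sub_C_ne_zero])] at h
    simpa using h.symm
  have h := congrArg (fun s => (s.map g).sum) hroots
  simp only [Multiset.map_map] at h
  exact h

end Matrix

section Frobenius

variable {d n : ℕ}

theorem frob_sq_eq_trace (M : Matrix (Fin d) (Fin n) ℝ) : frob M ^ 2 = (Mᵀ * M).trace := by
  rw [frob, Real.sq_sqrt (by positivity), trace, Finset.sum_comm]
  simp only [diag_apply, mul_apply, transpose_apply, sq]

theorem frob_eq_zero_iff {M : Matrix (Fin d) (Fin n) ℝ} : frob M = 0 ↔ M = 0 := by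
  rw [frob, Real.sqrt_eq_zero (by positivity),
    Finset.sum_eq_zero_iff_of_nonneg (fun i _ => by positivity)]
  simp_rw [Finset.sum_eq_zero_iff_of_nonneg (fun _ _ => sq_nonneg _), Finset.mem_univ,
    true_imp_iff, sq_eq_zero_iff, ← Matrix.ext_iff, Matrix.zero_apply]

theorem frob_sub_sq (X S A : Matrix (Fin d) (Fin n) ℝ) :
    frob (X - A) ^ 2 =
      frob (X - S) ^ 2 + 2 * ((X - S)ᵀ * (S - A)).trace + frob (S - A) ^ 2 := by
  rw [frob_sq_eq_trace, frob_sq_eq_trace, frob_sq_eq_trace, ← sub_add_sub_cancel X S A]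
  generalize X - S = P
  generalize S - A = Q
  rw [transpose_add, Matrix.add_mul, Matrix.mul_add, Matrix.mul_add, trace_add, trace_add,
    trace_add, ← trace_transpose (Qᵀ * P), transpose_mul, transpose_transpose]
  ring

theorem add_half_frob_sq_lt_of_subgradient {g : Matrix (Fin d) (Fin n) ℝ → ℝ}
    {A S X : Matrix (Fin d) (Fin n) ℝ} (hg : ((A - S)ᵀ * (X - S)).trace ≤ g X - g S)
    (hXS : X ≠ S) :
    g S + 1 / 2 * frob (S - A) ^ 2 < g X + 1 / 2 * frob (X - A) ^ 2 := by
  have hpos : 0 < frob (X - S) ^ 2 := by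
    have : frob (X - S) ≠ 0 := frob_eq_zero_iff.not.mpr (sub_ne_zero.mpr hXS)
    positivity
  have hcross : ((X - S)ᵀ * (S - A)).trace = -((A - S)ᵀ * (X - S)).trace := by
    rw [← trace_transpose, transpose_mul, transpose_transpose, ← neg_sub A S, transpose_neg,
      Matrix.neg_mul, trace_neg]
  rw [frob_sub_sq X S A, hcross]
  linarith

end Frobenius

section NuclearNorm

variable {d n : ℕ}

theorem trace_transpose_mul_le_mul_nuclearNorm {τ : ℝ} (hτ : 0 ≤ τ)
    {W : Matrix (Fin d) (Fin n) ℝ} (hW : ∀ v, (W *ᵥ v) ⬝ᵥ (W *ᵥ v) ≤ τ ^ 2 * (v ⬝ᵥ v))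
    (X : Matrix (Fin d) (Fin n) ℝ) : (Wᵀ * X).trace ≤ τ * nuclearNorm X := by
  set hH := isHermitian_transpose_mul_self X
  set Q : Matrix (Fin n) (Fin n) ℝ := ↑hH.eigenvectorUnitary
  have hQ : Q * Qᵀ = 1 := by
    simpa only [star_eq_conjTranspose, conjTranspose_eq_transpose_of_trivial] using
      mem_unitaryGroup_iff.mp hH.eigenvectorUnitary.2
  rw [trace_transpose_mul_eq_sum_dotProduct hQ, nuclearNorm, Finset.mul_sum]
  refine Finset.sum_le_sum fun i _ => ?_
  simp only [Q, IsHermitian.eigenvectorUnitary_transpose_apply]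
  set q := ⇑(hH.eigenvectorBasis i)
  have hq : q ⬝ᵥ q = 1 := by
    have h := hH.eigenvectorBasis.inner_eq_one i
    rw [EuclideanSpace.inner_eq_star_dotProduct] at h
    simpa using h
  have hXq : (X *ᵥ q) ⬝ᵥ (X *ᵥ q) = hH.eigenvalues i := by
    rw [dotProduct_mulVec_self, hH.mulVec_eigenvectorBasis, dotProduct_smul, hq, smul_eq_mul,
      mul_one]
  have hWq : √((W *ᵥ q) ⬝ᵥ (W *ᵥ q)) ≤ τ := by
    rw [Real.sqrt_le_left hτ]
    simpa [hq] using hW q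
  calc (W *ᵥ q) ⬝ᵥ (X *ᵥ q) ≤ √((W *ᵥ q) ⬝ᵥ (W *ᵥ q)) * √((X *ᵥ q) ⬝ᵥ (X *ᵥ q)) :=
        dotProduct_le_sqrt_mul_sqrt _ _
    _ ≤ τ * √(hH.eigenvalues i) := by rw [hXq]; gcongr

theorem nuclearNorm_mul_diagonal_mul_transpose {U : Matrix (Fin d) (Fin n) ℝ}
    {V : Matrix (Fin n) (Fin n) ℝ} (hU : Uᵀ * U = 1) (hV : Vᵀ * V = 1) (s : Fin n → ℝ) :
    nuclearNorm (U * diagonal s * Vᵀ) = ∑ i, |s i| := by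
  have hcharpoly : ((U * diagonal s * Vᵀ)ᵀ * (U * diagonal s * Vᵀ)).charpoly =
      ∏ i, (Polynomial.X - Polynomial.C (s i ^ 2)) := by
    rw [transpose_mul_diagonal_mul_transpose hU, Matrix.mul_assoc, charpoly_mul_comm,
      Matrix.mul_assoc, hV, Matrix.mul_one, charpoly_diagonal]
    simp only [Pi.mul_apply, sq]
  rw [nuclearNorm,
    (isHermitian_transpose_mul_self _).sum_comp_eigenvalues_of_charpoly_eq hcharpoly]
  simp_rw [Real.sqrt_sq_eq_abs]

end NuclearNorm

theorem stmt3_general {d n : ℕ} (τ : ℝ) (hτ : 0 < τ)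
    (A : Matrix (Fin d) (Fin n) ℝ)
    (U : Matrix (Fin d) (Fin n) ℝ) (V : Matrix (Fin n) (Fin n) ℝ)
    (σ : Fin n → ℝ) (hσ : ∀ i, 0 ≤ σ i)
    (hU : Uᵀ * U = 1) (hV : Vᵀ * V = 1)
    (hA : A = U * Matrix.diagonal σ * Vᵀ)
    (S : Matrix (Fin d) (Fin n) ℝ)
    (hS : S = U * Matrix.diagonal (fun i => max (σ i - τ) 0) * Vᵀ) :
    ∀ X : Matrix (Fin d) (Fin n) ℝ, X ≠ S →
      τ * nuclearNorm S + (1 / 2) * (frob (S - A)) ^ 2 <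
        τ * nuclearNorm X + (1 / 2) * (frob (X - A)) ^ 2 := by
  intro X hXS
  set μ : Fin n → ℝ := fun i => max (σ i - τ) 0
  have hres : A - S = U * diagonal (σ - μ) * Vᵀ := by
    rw [hA, hS, ← Matrix.sub_mul, ← Matrix.mul_sub, diagonal_sub]
    rfl
  have hres_le : ∀ i, |(σ - μ) i| ≤ τ := fun i => by
    simp only [Pi.sub_apply, μ, abs_le]
    constructor <;> cases max_cases (σ i - τ) 0 <;> linarith [hσ i]
  have hnormS : nuclearNorm S = ∑ i, μ i := by
    rw [hS, nuclearNorm_mul_diagonal_mul_transpose hU hV]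
    exact Finset.sum_congr rfl fun i _ => abs_of_nonneg (le_max_right _ _)
  have hdual : ((A - S)ᵀ * X).trace ≤ τ * nuclearNorm X := by
    refine trace_transpose_mul_le_mul_nuclearNorm hτ.le (fun v => ?_) X
    rw [hres]
    exact dotProduct_mulVec_self_le_of_abs_le hU hV hres_le v
  have hattained : ((A - S)ᵀ * S).trace = τ * nuclearNorm S := by
    rw [hnormS, hres, hS, trace_transpose_mul_diagonal_mul_transpose hU hV, Finset.mul_sum]
    refine Finset.sum_congr rfl fun i _ => ?_
    simp only [Pi.sub_apply, μ]
    rcases max_cases (σ i - τ) 0 with ⟨hmax, _⟩ | ⟨hmax, _⟩ <;> rw [hmax] <;> ring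
  refine add_half_frob_sq_lt_of_subgradient (g := fun Y => τ * nuclearNorm Y) ?_ hXS
  rw [Matrix.mul_sub, trace_sub]
  linarith

/-- singular value thresholding S_τ(A) = U diag(max(σᵢ−τ,0)) Vᵀ is the unique
minimizer of X ↦ τ‖X‖_* + (1/2)‖X − A‖_F². -/
theorem stmt3 {d n : ℕ} (hdn : d ≥ n) (τ : ℝ) (hτ : 0 < τ)
    (A : Matrix (Fin d) (Fin n) ℝ)
    (U : Matrix (Fin d) (Fin n) ℝ) (V : Matrix (Fin n) (Fin n) ℝ)
    (σ : Fin n → ℝ) (hσ : ∀ i, 0 ≤ σ i) (hσmono : Antitone σ)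
    (hU : Uᵀ * U = 1) (hV : Vᵀ * V = 1)
    (hA : A = U * Matrix.diagonal σ * Vᵀ)
    (S : Matrix (Fin d) (Fin n) ℝ)
    (hS : S = U * Matrix.diagonal (fun i => max (σ i - τ) 0) * Vᵀ) :
    ∀ X : Matrix (Fin d) (Fin n) ℝ, X ≠ S →
      τ * nuclearNorm S + (1 / 2) * (frob (S - A)) ^ 2 <
        τ * nuclearNorm X + (1 / 2) * (frob (X - A)) ^ 2 :=
  stmt3_general τ hτ A U V σ hσ hU hV hA S hS
end

section
/- Let D = L + C with L, C ∈ ℝ^{d×n}, and suppose (L*, C*) is an optimizer of min ‖L‖_* + λ‖C‖₁ subject to D = L + C. For any L* ≠ 0 with skinny SVD factors U, V and any W with ‖W‖₂ ≤ 1, UᵀW = 0, WV = 0, the entrywise maximum (in absolute value) of UVᵀ + W is at least 1/√(dn); consequently, if 0 ≤ λ < 1/√(dn), the subgradient optimality condition UVᵀ + W ∈ λ·∂‖C*‖₁ cannot hold with L* ≠ 0, i.e. λ ≥ 1/√(dn) is necessary for a nontrivial solution with a subgradient of ‖C‖₁ bounded entrywise by λ. -/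
open Matrix

/-- Lemma 1, lower bound: let L* ≠ 0 have skinny SVD with factors
U ∈ ℝ^{d×r}, V ∈ ℝ^{n×r} (orthonormal columns, r ≥ 1) and let W satisfy ‖W‖₂ ≤ 1,
UᵀW = 0, WV = 0. If every entry of the nuclear-norm subgradient UVᵀ + W is bounded in
absolute value by λ (as required for it to be λ times a subgradient of ‖C‖₁),
then λ ≥ 1/√(dn); i.e. λ ≥ 1/√(dn) is necessary for a nontrivial solution. -/
theorem stmt14 {d n r : ℕ} (hd : 0 < d) (hn : 0 < n) (hr : 0 < r) (lam : ℝ)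
    (U : Matrix (Fin d) (Fin r) ℝ) (V : Matrix (Fin n) (Fin r) ℝ)
    (W : Matrix (Fin d) (Fin n) ℝ)
    (hU : Uᵀ * U = 1) (hV : Vᵀ * V = 1)
    (hW : ∀ v : Fin n → ℝ, ∑ i, (W.mulVec v i) ^ 2 ≤ ∑ j, (v j) ^ 2)
    (hUW : Uᵀ * W = 0) (hWV : W * V = 0)
    (hbound : ∀ i j, |(U * Vᵀ + W) i j| ≤ lam) :
    1 / Real.sqrt (d * n) ≤ lam := by
  set M := U * Vᵀ + W with hM
  have hlam0 : 0 ≤ lam := le_trans (abs_nonneg _) (hbound ⟨0, hd⟩ ⟨0, hn⟩)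
  have hWU : Wᵀ * U = 0 := by
    have := congrArg Matrix.transpose hUW
    simpa [Matrix.transpose_mul] using this
  have expand : Mᵀ * M = V * Vᵀ + Wᵀ * W := by
    have hMT : Mᵀ = V * Uᵀ + Wᵀ := by
      simp [hM, Matrix.transpose_add, Matrix.transpose_mul]
    rw [hMT, hM]
    simp only [Matrix.add_mul, Matrix.mul_add, Matrix.mul_assoc]
    rw [show Uᵀ * (U * Vᵀ) = Vᵀ by rw [← Matrix.mul_assoc, hU, Matrix.one_mul],
      hUW, show Wᵀ * (U * Vᵀ) = 0 by rw [← Matrix.mul_assoc, hWU, Matrix.zero_mul]]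
    simp only [Matrix.mul_zero, add_zero, zero_add]
  have htraceVV : Matrix.trace (V * Vᵀ) = (r : ℝ) := by
    rw [Matrix.trace_mul_comm, hV, Matrix.trace_one]
    simp
  have htraceWW : 0 ≤ Matrix.trace (Wᵀ * W) := by
    unfold Matrix.trace
    refine Finset.sum_nonneg fun j _ => ?_
    simp only [Matrix.diag_apply, Matrix.mul_apply, Matrix.transpose_apply]
    exact Finset.sum_nonneg fun i _ => mul_self_nonneg _
  have hlow : (1 : ℝ) ≤ Matrix.trace (Mᵀ * M) := by
    rw [expand, Matrix.trace_add, htraceVV]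
    have : (1 : ℝ) ≤ (r : ℝ) := by exact_mod_cast hr
    linarith
  have hup : Matrix.trace (Mᵀ * M) ≤ (d : ℝ) * n * lam ^ 2 := by
    unfold Matrix.trace
    have : ∀ j : Fin n, (Mᵀ * M).diag j ≤ (d : ℝ) * lam ^ 2 := by
      intro j
      simp only [Matrix.diag_apply, Matrix.mul_apply, Matrix.transpose_apply]
      calc ∑ i, M i j * M i j ≤ ∑ _i : Fin d, lam ^ 2 := by
            refine Finset.sum_le_sum fun i _ => ?_
            have h := hbound i j
            calc M i j * M i j = |M i j| ^ 2 := by rw [sq_abs]; ring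
              _ ≤ lam ^ 2 := pow_le_pow_left₀ (abs_nonneg _) h 2
        _ = (d : ℝ) * lam ^ 2 := by simp [Finset.sum_const, mul_comm]
    calc ∑ j, (Mᵀ * M).diag j ≤ ∑ _j : Fin n, (d : ℝ) * lam ^ 2 :=
          Finset.sum_le_sum fun j _ => this j
      _ = (d : ℝ) * n * lam ^ 2 := by simp [Finset.sum_const]; ring
  have hdn : (0 : ℝ) < (d : ℝ) * n := by positivity
  have h1 : (1 : ℝ) ≤ (d : ℝ) * n * lam ^ 2 := le_trans hlow hup
  have hsq : (1 : ℝ) ≤ (Real.sqrt ((d : ℝ) * n) * lam) ^ 2 := by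
    rw [mul_pow, Real.sq_sqrt hdn.le]
    exact h1
  have hsl : (1 : ℝ) ≤ Real.sqrt ((d : ℝ) * n) * lam := by
    nlinarith [mul_nonneg (Real.sqrt_nonneg ((d : ℝ) * n)) hlam0]
  rw [div_le_iff₀ (Real.sqrt_pos.mpr hdn)]
  linarith
end
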